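/- arXiv:0805.3460 — 5 statements merged into one kernel-verified Lean document; each statement's English description precedes it below -/
import Mathlib

section
/- Let Z be an abelian group and A a subset of Z. The following are equivalent: (i) 0 ∈ A and A - 2A ⊆ A; (ii) 0 ∈ A and 2A - A ⊆ A; (iii) 2⟨A⟩ ⊆ A and 2⟨A⟩ - A ⊆ A, where ⟨A⟩ denotes the subgroup of Z generated by A; (iv) A is a union of cosets modulo 2⟨A⟩, including the trivial coset 2⟨A⟩. -/
/-- For a subset `A` of an abelian group `Z`, TFAE:
(i) `0 ∈ A` and `A - 2A ⊆ A`; (ii) `0 ∈ A` and `2A - A ⊆ A`;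
(iii) `2⟨A⟩ ⊆ A` and `2⟨A⟩ - A ⊆ A`;
(iv) `A` is a union of cosets modulo `2⟨A⟩`, including the trivial coset. -/
theorem stmt_1 {Z : Type*} [AddCommGroup Z] (A : Set Z) :
    List.TFAE
      [ (0 : Z) ∈ A ∧ ∀ a ∈ A, ∀ b ∈ A, a - (2 : ℤ) • b ∈ A,
        (0 : Z) ∈ A ∧ ∀ a ∈ A, ∀ b ∈ A, (2 : ℤ) • a - b ∈ A,
        (∀ x ∈ AddSubgroup.closure A, (2 : ℤ) • x ∈ A) ∧
          ∀ x ∈ AddSubgroup.closure A, ∀ a ∈ A, (2 : ℤ) • x - a ∈ A,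
        (∀ x ∈ AddSubgroup.closure A, (2 : ℤ) • x ∈ A) ∧
          ∀ a ∈ A, ∀ x ∈ AddSubgroup.closure A, a + (2 : ℤ) • x ∈ A ] := by
  tfae_have 1 → 2 := by
    rintro ⟨h0, h⟩
    have hneg : ∀ c ∈ A, -c ∈ A := fun c hc => by
      have := h c hc c hc; simpa [two_zsmul, sub_add_eq_sub_sub] using this
    exact ⟨h0, fun a ha b hb => by
      have := hneg _ (h b hb a ha); simpa [neg_sub] using this⟩
  tfae_have 2 → 1 := by
    rintro ⟨h0, h⟩
    have hneg : ∀ c ∈ A, -c ∈ A := fun c hc => by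
      have := h 0 h0 c hc; simpa using this
    exact ⟨h0, fun a ha b hb => by
      have := hneg _ (h b hb a ha); simpa [neg_sub] using this⟩
  tfae_have 1 → 3 := by
    rintro ⟨h0, h⟩
    have hneg : ∀ c ∈ A, -c ∈ A := fun c hc => by
      have := h c hc c hc; simpa [two_zsmul, sub_add_eq_sub_sub] using this
    have key : ∀ x ∈ AddSubgroup.closure A, ∀ a ∈ A, a - (2 : ℤ) • x ∈ A := by
      intro x hx
      induction hx using AddSubgroup.closure_induction with
      | mem y hy => exact fun a ha => h a ha y hy
      | zero => intro a ha; simpa using ha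
      | add y z hy hz ihy ihz =>
          intro a ha
          have := ihz _ (ihy a ha)
          simpa [smul_add, sub_sub] using this
      | neg y hy ihy =>
          intro a ha
          have := hneg _ (ihy (-a) (hneg a ha))
          simpa [neg_sub, sub_neg_eq_add, add_comm] using this
    refine ⟨fun x hx => ?_, fun x hx a ha => ?_⟩
    · have := hneg _ (key x hx 0 h0); simpa using this
    · have := hneg _ (key x hx a ha); simpa [neg_sub] using this
  tfae_have 3 → 4 := by
    rintro ⟨h1, h2⟩
    refine ⟨h1, fun a ha x hx => ?_⟩
    have hxa : x + a ∈ AddSubgroup.closure A :=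
      AddSubgroup.add_mem _ hx (AddSubgroup.subset_closure ha)
    have := h2 _ hxa a ha
    have e : (2 : ℤ) • (x + a) - a = a + (2 : ℤ) • x := by
      simp [smul_add, two_zsmul]; abel
    rwa [e] at this
  tfae_have 4 → 1 := by
    rintro ⟨h1, h2⟩
    have h0 : (0 : Z) ∈ A := by simpa using h1 0 (AddSubgroup.zero_mem _)
    refine ⟨h0, fun a ha b hb => ?_⟩
    have := h2 a ha (-b) (AddSubgroup.neg_mem _ (AddSubgroup.subset_closure hb))
    simpa [sub_eq_add_neg] using this
  tfae_finish
end

section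
/- Let L be a Lie algebra over a field K of characteristic 0, T ⊆ L a toral subalgebra with root space decomposition L = ⨁_α L_α, and let α, β be roots with β ≠ -α, β ≠ 0. If (e, h, f) ∈ L_α × T × L_{-α} is an sl2-triple (i.e., [e,f] = -h, [h,e] = 2e, [h,f] = -2f) with ad e and ad f locally nilpotent, then β(h) is an integer. -/
/-- Let `L` be a Lie algebra over a field `K` of characteristic 0 with a toral
subalgebra `T` and root space decomposition `L = ⨁_α L_α`, and let `α, β` be
roots with `β ≠ -α`, `β ≠ 0`. If `(e, h, f) ∈ L_α × T × L_{-α}` is an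
sl₂-triple (`[e,f] = -h`, `[h,e] = 2e`, `[h,f] = -2f`) with `ad e` and `ad f`
locally nilpotent, then `β(h)` is an integer. -/
theorem stmt_5 {K : Type*} [Field K] [CharZero K]
    {L : Type*} [LieRing L] [LieAlgebra K L]
    (T : Submodule K L) [DecidableEq (Module.Dual K T)]
    (Lsp : Module.Dual K T → Submodule K L)
    (hmem : ∀ (γ : Module.Dual K T) (x : L),
      x ∈ Lsp γ ↔ ∀ t : T, ⁅(t : L), x⁆ = γ t • x)
    (hdec : DirectSum.IsInternal Lsp)
    (α β : Module.Dual K T) (hαroot : Lsp α ≠ ⊥) (hβroot : Lsp β ≠ ⊥)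
    (hβα : β ≠ -α) (hβ0 : β ≠ 0)
    (e f : L) (h : T) (he : e ∈ Lsp α) (hf : f ∈ Lsp (-α))
    (h1 : ⁅e, f⁆ = -(h : L))
    (h2 : ⁅(h : L), e⁆ = (2 : K) • e)
    (h3 : ⁅(h : L), f⁆ = (-2 : K) • f)
    (hnile : ∀ x : L, ∃ n : ℕ, ((LieAlgebra.ad K L e) ^ n) x = 0)
    (hnilf : ∀ x : L, ∃ n : ℕ, ((LieAlgebra.ad K L f) ^ n) x = 0) :
    ∃ m : ℤ, β h = (m : K) := by
  classical
  -- trivial case h = 0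
  by_cases hh0 : (h : L) = 0
  · refine ⟨0, ?_⟩
    have : h = 0 := Subtype.ext hh0
    simp [this]
  -- the sl2 triple (h, -e, f)
  have triple : IsSl2Triple (h : L) (-e) f := by
    refine ⟨hh0, by rw [neg_lie, h1, neg_neg], ?_, ?_⟩
    · rw [lie_neg, h2]
      rw [← Nat.cast_smul_eq_nsmul K]
      push_cast
      rw [smul_neg]
    · rw [h3, ← Nat.cast_smul_eq_nsmul K]
      push_cast
      rw [neg_smul]
  -- pick a nonzero x in Lsp β
  obtain ⟨x, hx, hx0⟩ := (Submodule.ne_bot_iff _).mp hβroot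
  -- iterates of ad (-e)
  set E : Module.End K L := LieAlgebra.ad K L (-e) with hE
  have key : ∀ k : ℕ, ⁅(h : L), (E ^ k) x⁆ = (β h + 2 * k) • (E ^ k) x := by
    intro k
    induction k with
    | zero => simpa using (hmem β x).mp hx h
    | succ k ih =>
      rw [pow_succ', Module.End.mul_apply]
      have hEz : ∀ z : L, E z = ⁅-e, z⁆ := fun z => rfl
      rw [hEz, leibniz_lie, lie_neg, h2, ih, lie_smul]
      have h4 : ⁅-((2:K) • e), (E ^ k) x⁆ = (2:K) • ⁅-e, (E ^ k) x⁆ := by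
        rw [← smul_neg, smul_lie]
      rw [h4, ← add_smul]
      congr 1
      push_cast
      ring
  -- local nilpotency of E on x
  have hex : ∃ n : ℕ, (E ^ n) x = 0 := by
    obtain ⟨n, hn⟩ := hnile x
    refine ⟨n, ?_⟩
    have : E = -(LieAlgebra.ad K L e) := by
      ext z; simp [hE]
    rw [this, neg_pow, Module.End.mul_apply, hn, map_zero]
  set N := Nat.find hex with hN
  have hN0 : N ≠ 0 := by
    intro hc
    have := Nat.find_spec hex
    rw [← hN, hc] at this
    simp at this
    exact hx0 this
  obtain ⟨n, hn⟩ : ∃ n, N = n + 1 := ⟨N - 1, (Nat.succ_pred_eq_of_ne_zero hN0).symm⟩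
  set y : L := (E ^ n) x with hy
  have hy0 : y ≠ 0 := Nat.find_min hex (by omega)
  have hye : ⁅-e, y⁆ = 0 := by
    have := Nat.find_spec hex
    rw [← hN] at this
    rw [hn, pow_succ', Module.End.mul_apply] at this
    exact this
  set μ : K := β h + 2 * n with hμ
  have P : triple.HasPrimitiveVectorWith y μ :=
    ⟨hy0, key n, hye⟩
  -- local nilpotency of ad f on y
  have hfy : ∃ k : ℕ, ((LieModule.toEnd K L L f) ^ k) y = 0 := hnilf y
  set M := Nat.find hfy with hM
  have hM0 : M ≠ 0 := by
    intro hc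
    have := Nat.find_spec hfy
    rw [← hM, hc] at this
    simp [hy0] at this
  obtain ⟨j, hj⟩ : ∃ j, M = j + 1 := ⟨M - 1, (Nat.succ_pred_eq_of_ne_zero hM0).symm⟩
  have hzero : ((LieModule.toEnd K L L f) ^ (j + 1)) y = 0 := by
    have := Nat.find_spec hfy; rw [← hM, hj] at this; exact this
  have hnz : ((LieModule.toEnd K L L f) ^ j) y ≠ 0 := Nat.find_min hfy (by omega)
  have := P.lie_e_pow_succ_toEnd_f j
  rw [hzero, lie_zero, eq_comm, smul_eq_zero] at this
  rcases this with h' | h'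
  · have hj2 : μ = j := by
      rcases mul_eq_zero.mp h' with h'' | h''
      · have hne := Nat.cast_add_one_ne_zero (R := K) j
        push_cast at hne
        exact absurd h'' hne
      · exact sub_eq_zero.mp h''
    refine ⟨(j : ℤ) - 2 * n, ?_⟩
    have hβh : β h = μ - 2 * n := by rw [hμ]; ring
    rw [hβh, hj2]
    push_cast
    ring
  · exact absurd h' hnz
end

section
/- Let L be a perfect Λ-graded Lie algebra over a commutative ring k. Then the centre Z(L) is a graded ideal, i.e., Z(L) = ⨁_{λ∈Λ} (Z(L) ∩ L^λ). -/
/-- The centre of a perfect Λ-graded Lie algebra `L` over a commutative ring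
`k` is a graded ideal: `Z(L) = ⨁_{λ ∈ Λ} (Z(L) ∩ L^λ)`. -/
theorem stmt_11 {k : Type*} [CommRing k]
    {Λ : Type*} [AddCommGroup Λ] [DecidableEq Λ]
    {L : Type*} [LieRing L] [LieAlgebra k L]
    (𝒜 : Λ → Submodule k L)
    (hdec : DirectSum.IsInternal 𝒜)
    (hbr : ∀ (lam mu : Λ), ∀ x ∈ 𝒜 lam, ∀ y ∈ 𝒜 mu, ⁅x, y⁆ ∈ 𝒜 (lam + mu))
    (hperf : Submodule.span k {x : L | ∃ a b : L, x = ⁅a, b⁆} = ⊤) :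
    LieSubmodule.toSubmodule (LieAlgebra.center k L) =
      ⨆ lam : Λ, LieSubmodule.toSubmodule (LieAlgebra.center k L) ⊓ 𝒜 lam := by
  classical
  refine le_antisymm ?_ (iSup_le fun lam => inf_le_left)
  intro z hz
  set d := (LinearEquiv.ofBijective (DirectSum.coeLinearMap 𝒜) hdec).symm z with hd
  have hzd : z = DirectSum.coeLinearMap 𝒜 d :=
    ((LinearEquiv.ofBijective (DirectSum.coeLinearMap 𝒜) hdec).apply_symm_apply z).symm
  have hsum : DirectSum.coeLinearMap 𝒜 d = ∑ lam ∈ d.support, (d lam : L) := by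
    rw [DirectSum.coeLinearMap_eq_dfinsuppSum]; rfl
  -- each component is central
  have hcent : ∀ lam : Λ, (d lam : L) ∈ LieAlgebra.center k L := by
    intro lam0
    rw [LieAlgebra.center, LieModule.mem_maxTrivSubmodule]
    -- homogeneous case
    have H : ∀ mu : Λ, ∀ y ∈ 𝒜 mu, ⁅y, (d lam0 : L)⁆ = 0 := by
      intro mu y hy
      set w : DirectSum Λ (fun i => 𝒜 i) :=
        ∑ lam ∈ d.support, DirectSum.of (fun lam => 𝒜 lam) (mu + lam)
          ⟨⁅y, (d lam : L)⁆, hbr mu lam y hy _ (d lam).2⟩ with hw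
      have hwc : DirectSum.coeLinearMap 𝒜 w = 0 := by
        rw [hw, map_sum]
        simp only [DirectSum.coeLinearMap_of]
        have : ∑ lam ∈ d.support, ⁅y, (d lam : L)⁆ = ⁅y, z⁆ := by
          rw [hzd, hsum]
          exact (map_sum (LieModule.toEnd k L L y) (fun lam => (d lam : L)) d.support).symm
        rw [this]
        exact (LieModule.mem_maxTrivSubmodule k L L z).mp hz y
      have hw0 : w = 0 := (LinearEquiv.ofBijective (DirectSum.coeLinearMap 𝒜) hdec).map_eq_zero_iff.mp hwc
      by_cases hmem : lam0 ∈ d.support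
      · have : w (mu + lam0) = ⟨⁅y, (d lam0 : L)⁆, hbr mu lam0 y hy _ (d lam0).2⟩ := by
          rw [hw, DFinsupp.finset_sum_apply]
          rw [Finset.sum_eq_single lam0]
          · exact DirectSum.of_eq_same _ _
          · intro b _ hb
            exact DirectSum.of_eq_of_ne _ _ _ (fun h => hb (by exact add_left_cancel h.symm))
          · intro h; exact absurd hmem h
        have h2 : (⟨⁅y, (d lam0 : L)⁆, hbr mu lam0 y hy _ (d lam0).2⟩ : 𝒜 (mu + lam0)) = 0 := by
          rw [← this, hw0]; rfl
        exact congrArg Subtype.val h2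
      · rw [DFinsupp.notMem_support_iff.mp hmem]
        simp
    -- general case
    intro y
    have hy : y ∈ (⊤ : Submodule k L) := trivial
    rw [← hdec.submodule_iSup_eq_top] at hy
    refine Submodule.iSup_induction 𝒜 (motive := fun y => ⁅y, (d lam0 : L)⁆ = 0) hy ?_ ?_ ?_
    · intro mu x hx; exact H mu x hx
    · simp
    · intro a b ha hb; rw [add_lie, ha, hb, add_zero]
  rw [hzd, hsum]
  refine Submodule.sum_mem _ fun lam _ => ?_
  exact Submodule.mem_iSup_of_mem lam ⟨hcent lam, (d lam).2⟩
end

section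
/- Let A be a unital associative k-algebra, n ≥ 2, and z ∈ A. The scalar matrix z·E_n is central in sl_n(A) (i.e., commutes under the commutator bracket with all elements of sl_n(A) ⊆ Mat_n(A)) if and only if z lies in the centre Z(A) of A. Consequently Z(sl_n(A)) = {z·E_n : z ∈ Z(A), n·z ∈ [A,A]}. -/
open Matrix

private lemma stmt_16_keyA {k A : Type*} [CommRing k] [Ring A] [Algebra k A]
    {n : ℕ} (hn : 2 ≤ n) (z : A)
    (h : ∀ x : Matrix (Fin n) (Fin n) A,
      Matrix.trace x ∈ Submodule.span k {c : A | ∃ a b : A, c = a * b - b * a} →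
      ⁅z • (1 : Matrix (Fin n) (Fin n) A), x⁆ = 0) :
    ∀ a : A, z * a = a * z := by
  intro a
  set i0 : Fin n := ⟨0, by omega⟩
  set i1 : Fin n := ⟨1, by omega⟩
  have hne : i0 ≠ i1 := Fin.ne_of_val_ne (by norm_num)
  have hx : Matrix.trace (single i0 i1 a)
      ∈ Submodule.span k {c : A | ∃ a b : A, c = a * b - b * a} := by
    rw [Matrix.trace_single_eq_of_ne _ _ _ hne]
    exact Submodule.zero_mem _
  have h2 := h _ hx
  rw [Ring.lie_def, sub_eq_zero] at h2
  have h3 := congrFun (congrFun h2 i0) i1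
  simpa [Matrix.smul_apply, Matrix.one_apply, smul_eq_mul, hne] using h3

private lemma stmt_16_keyB {A : Type*} [Ring A] {n : ℕ} (z : A)
    (hz : ∀ a : A, z * a = a * z) (y : Matrix (Fin n) (Fin n) A) :
    ⁅z • (1 : Matrix (Fin n) (Fin n) A), y⁆ = 0 := by
  rw [Ring.lie_def, sub_eq_zero]
  ext p q
  simp [Matrix.mul_apply, Matrix.smul_apply, Matrix.one_apply, smul_eq_mul,
    mul_ite, ite_mul, mul_zero, zero_mul, mul_one, one_mul,
    Finset.sum_ite_eq, Finset.sum_ite_eq', hz]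

/-- For a unital associative `k`-algebra `A` and `n ≥ 2`: a scalar matrix
`z·E_n` commutes (under the commutator bracket) with all elements of
`sl_n(A) = {x | tr x ∈ [A,A]}` iff `z ∈ Z(A)`; consequently
`Z(sl_n(A)) = {z·E_n : z ∈ Z(A), n·z ∈ [A,A]}`. -/
theorem stmt_16 {k A : Type*} [CommRing k] [Ring A] [Algebra k A]
    {n : ℕ} (hn : 2 ≤ n) :
    (∀ z : A,
      ((∀ x : Matrix (Fin n) (Fin n) A,
          Matrix.trace x ∈ Submodule.span k {c : A | ∃ a b : A, c = a * b - b * a} →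
          ⁅z • (1 : Matrix (Fin n) (Fin n) A), x⁆ = 0) ↔
        ∀ a : A, z * a = a * z)) ∧
    {x : Matrix (Fin n) (Fin n) A |
        Matrix.trace x ∈ Submodule.span k {c : A | ∃ a b : A, c = a * b - b * a} ∧
        ∀ y : Matrix (Fin n) (Fin n) A,
          Matrix.trace y ∈ Submodule.span k {c : A | ∃ a b : A, c = a * b - b * a} →
          ⁅x, y⁆ = 0} =
      {x : Matrix (Fin n) (Fin n) A | ∃ z : A, (∀ a : A, z * a = a * z) ∧
        n • z ∈ Submodule.span k {c : A | ∃ a b : A, c = a * b - b * a} ∧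
        x = z • (1 : Matrix (Fin n) (Fin n) A)} := by
  have htr1 : ∀ z : A, Matrix.trace (z • (1 : Matrix (Fin n) (Fin n) A)) = n • z := by
    intro z
    simp [Matrix.trace, Matrix.diag, Matrix.smul_apply, Matrix.one_apply_eq,
      Finset.sum_const, Finset.card_univ, Fintype.card_fin]
  constructor
  · intro z
    exact ⟨stmt_16_keyA hn z, fun hz x _ => stmt_16_keyB z hz x⟩
  · ext x
    simp only [Set.mem_setOf_eq]
    constructor
    · rintro ⟨htr, hcomm⟩
      set i0 : Fin n := ⟨0, by omega⟩
      set i1 : Fin n := ⟨1, by omega⟩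
      have hne : i0 ≠ i1 := Fin.ne_of_val_ne (by norm_num)
      set z : A := x i0 i0 with hzdef
      -- off-diagonal entries vanish
      have off : ∀ p q : Fin n, p ≠ q → x p q = 0 := by
        intro p q hpq
        set j : Fin n := if q = i0 then i1 else i0 with hj
        have hjq : j ≠ q := by
          rw [hj]; split
          · rename_i h; rw [h]; exact hne.symm
          · rename_i h; exact fun hc => h hc.symm
        have hy : Matrix.trace (single q j (1 : A))
            ∈ Submodule.span k {c : A | ∃ a b : A, c = a * b - b * a} := by
          rw [Matrix.trace_single_eq_of_ne _ _ _ hjq.symm]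
          exact Submodule.zero_mem _
        have h2 := hcomm _ hy
        rw [Ring.lie_def, sub_eq_zero] at h2
        have h3 := congrFun (congrFun h2 p) j
        rw [Matrix.mul_single_apply_same,
          Matrix.single_mul_apply_of_ne (h := hpq)] at h3
        simpa using h3
      -- diagonal entries are all equal to z
      have diag : ∀ p : Fin n, x p p = z := by
        intro p
        by_cases hp : p = i0
        · rw [hp]
        · have hy : Matrix.trace (single i0 p (1 : A))
              ∈ Submodule.span k {c : A | ∃ a b : A, c = a * b - b * a} := by
            rw [Matrix.trace_single_eq_of_ne _ _ _ (Ne.symm hp)]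
            exact Submodule.zero_mem _
          have h2 := hcomm _ hy
          rw [Ring.lie_def, sub_eq_zero] at h2
          have h3 := congrFun (congrFun h2 i0) p
          rw [Matrix.mul_single_apply_same,
            Matrix.single_mul_apply_same] at h3
          simpa [hzdef] using h3.symm
      have hxz : x = z • (1 : Matrix (Fin n) (Fin n) A) := by
        ext p q
        by_cases hpq : p = q
        · subst hpq; simp [diag p]
        · simp [off p q hpq, Matrix.one_apply, hpq]
      refine ⟨z, ?_, ?_, hxz⟩
      · exact stmt_16_keyA hn z (fun y hy => hxz ▸ hcomm y hy)
      · rw [hxz, htr1] at htr; exact htr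
    · rintro ⟨z, hz, hnz, rfl⟩
      exact ⟨by rw [htr1]; exact hnz, fun y hy => stmt_16_keyB z hz y⟩
end

section
/- Let A be a Λ-graded unital associative algebra over a field F such that dim_F A^λ ≤ 1 for all λ and every nonzero homogeneous space contains an invertible element (an associative Λ-torus). Then A = Z(A) ⊕ [A,A] as F-vector spaces, where Z(A) is the centre and [A,A] = span{ab - ba : a,b ∈ A}. -/
set_option synthInstance.maxHeartbeats 1000000
set_option maxHeartbeats 2000000

/-- An associative Λ-torus `A` over a field `F` (graded with 1-dimensional
homogeneous spaces, each nonzero one containing an invertible element)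
decomposes as `A = Z(A) ⊕ [A,A]` as `F`-vector spaces. -/
theorem stmt_17 {F : Type*} [Field F]
    {Λ : Type*} [AddCommGroup Λ] [DecidableEq Λ]
    {A : Type*} [Ring A] [Algebra F A]
    (𝒜 : Λ → Submodule F A)
    (hdec : DirectSum.IsInternal 𝒜)
    (hone : (1 : A) ∈ 𝒜 0)
    (hmul : ∀ (lam mu : Λ), ∀ a ∈ 𝒜 lam, ∀ b ∈ 𝒜 mu, a * b ∈ 𝒜 (lam + mu))
    (hdim : ∀ lam : Λ, Module.rank F (𝒜 lam) ≤ 1)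
    (hinv : ∀ lam : Λ, 𝒜 lam ≠ ⊥ → ∃ u ∈ 𝒜 lam, IsUnit u) :
    IsCompl (Subalgebra.toSubmodule (Subalgebra.center F A))
      (Submodule.span F {c : A | ∃ a b : A, c = a * b - b * a}) := by
  classical
  obtain hA | hA := subsingleton_or_nontrivial A
  · haveI : Subsingleton (Submodule F A) := inferInstance
    constructor
    · rw [Subsingleton.elim (Subalgebra.toSubmodule (Subalgebra.center F A)) (⊥ : Submodule F A)]
      exact disjoint_bot_left
    · rw [Subsingleton.elim (Subalgebra.toSubmodule (Subalgebra.center F A)) (⊤ : Submodule F A)]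
      exact codisjoint_top_left
  haveI : DirectSum.Decomposition 𝒜 := hdec.chooseDecomposition
  set Z : Submodule F A := Subalgebra.toSubmodule (Subalgebra.center F A) with hZ
  set C : Submodule F A := Submodule.span F {c : A | ∃ a b : A, c = a * b - b * a} with hC
  set π : Λ → A →ₗ[F] A := fun ν =>
    { toFun := fun x => (DirectSum.decompose 𝒜 x ν : A)
      map_add' := by intros; simp
      map_smul' := by intros; simp [DirectSum.smul_apply] } with hπ
  have hπdef : ∀ (ν : Λ) (x : A), π ν x = (DirectSum.decompose 𝒜 x ν : A) := fun _ _ => rfl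
  have hπmem : ∀ (ν : Λ) (x : A), π ν x ∈ 𝒜 ν := fun ν x => SetLike.coe_mem _
  have hπsame : ∀ {ν : Λ} {x : A}, x ∈ 𝒜 ν → π ν x = x :=
    fun hx => DirectSum.decompose_of_mem_same 𝒜 hx
  have hπne : ∀ {lam ν : Λ} {x : A}, x ∈ 𝒜 lam → lam ≠ ν → π ν x = 0 := by
    intro lam ν x hx hne
    simpa [hπdef] using DirectSum.decompose_of_mem_ne 𝒜 hx hne
  have htop : (⊤ : Submodule F A) = iSup 𝒜 := hdec.submodule_iSup_eq_top.symm
  -- scalar multiples in a ≤1-dimensional component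
  have hscal : ∀ (ν : Λ) (u x : A), u ∈ 𝒜 ν → x ∈ 𝒜 ν → u ≠ 0 → ∃ c : F, x = c • u := by
    intro ν u x hu hx h0
    obtain ⟨v, hv⟩ := rank_le_one_iff.mp (hdim ν)
    obtain ⟨c, hc⟩ := hv ⟨u, hu⟩
    obtain ⟨d, hd⟩ := hv ⟨x, hx⟩
    have hc' : c • (v : A) = u := congrArg Subtype.val hc
    have hd' : d • (v : A) = x := congrArg Subtype.val hd
    have hc0 : c ≠ 0 := by rintro rfl; simp at hc'; exact h0 hc'.symm
    exact ⟨d * c⁻¹, by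
      rw [← hc', ← hd', smul_smul, mul_assoc, inv_mul_cancel₀ hc0, mul_one]⟩
  -- commuting with all homogeneous elements implies central
  have hcentral : ∀ p : A, (∀ (mu : Λ), ∀ w ∈ 𝒜 mu, p * w = w * p) → p ∈ Z := by
    intro p hp
    rw [hZ, Subalgebra.mem_toSubmodule, Subalgebra.mem_center_iff]
    intro a
    have ha : a ∈ LinearMap.ker (LinearMap.mulLeft F p - LinearMap.mulRight F p) := by
      have : iSup 𝒜 ≤ LinearMap.ker (LinearMap.mulLeft F p - LinearMap.mulRight F p) := by
        refine iSup_le fun mu w hw => ?_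
        simp [LinearMap.mem_ker, sub_eq_zero, hp mu w hw]
      exact this (htop ▸ Submodule.mem_top)
    have := (LinearMap.mem_ker).mp ha
    simp only [LinearMap.sub_apply, LinearMap.mulLeft_apply, LinearMap.mulRight_apply,
      sub_eq_zero] at this
    exact this.symm
  -- projections vs multiplication by homogeneous elements
  have hπr : ∀ (mu ν : Λ) (u : A), u ∈ 𝒜 mu → ∀ z : A, π (ν + mu) (z * u) = π ν z * u := by
    intro mu ν u hu z
    have hz : z ∈ iSup 𝒜 := htop ▸ Submodule.mem_top
    refine Submodule.iSup_induction 𝒜 (motive := fun z => π (ν + mu) (z * u) = π ν z * u) hz ?_ ?_ ?_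
    · intro lam x hx
      by_cases h : lam = ν
      · subst h
        rw [hπsame (hmul lam mu x hx u hu), hπsame hx]
      · rw [hπne (hmul lam mu x hx u hu) (by
          intro hcon; exact h (add_right_cancel hcon)), hπne hx h, zero_mul]
    · simp
    · intro x y hx hy
      rw [add_mul, map_add, hx, hy, map_add, add_mul]
  have hπl : ∀ (mu ν : Λ) (u : A), u ∈ 𝒜 mu → ∀ z : A, π (mu + ν) (u * z) = u * π ν z := by
    intro mu ν u hu z
    have hz : z ∈ iSup 𝒜 := htop ▸ Submodule.mem_top
    refine Submodule.iSup_induction 𝒜 (motive := fun z => π (mu + ν) (u * z) = u * π ν z) hz ?_ ?_ ?_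
    · intro lam x hx
      by_cases h : lam = ν
      · subst h
        rw [hπsame (hmul mu lam u hu x hx), hπsame hx]
      · rw [hπne (hmul mu lam u hu x hx) (by
          intro hcon; exact h (add_left_cancel hcon)), hπne hx h, mul_zero]
    · simp
    · intro x y hx hy
      rw [mul_add, map_add, hx, hy, map_add, mul_add]
  -- projections of central elements are central
  have hZproj : ∀ (ν : Λ) (z : A), z ∈ Z → π ν z ∈ Z := by
    intro ν z hz
    refine hcentral (π ν z) fun mu w hw => ?_
    have hzw : z * w = w * z := by
      rw [hZ, Subalgebra.mem_toSubmodule, Subalgebra.mem_center_iff] at hz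
      exact (hz w).symm
    have h1 := hπr mu ν w hw z
    have h2 := hπl mu ν w hw z
    rw [← h1, ← h2, hzw, add_comm ν mu]
  -- commutators have no components in central homogeneous spaces
  have hB2 : ∀ (ν : Λ), 𝒜 ν ≤ Z → ∀ a b : A, π ν (a * b - b * a) = 0 := by
    intro ν hν a b
    -- homogeneous case
    have key : ∀ (lam mu : Λ), ∀ a ∈ 𝒜 lam, ∀ b ∈ 𝒜 mu, π ν (a * b - b * a) = 0 := by
      intro lam mu a ha b hb
      have hab : a * b ∈ 𝒜 (lam + mu) := hmul lam mu a ha b hb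
      have hba : b * a ∈ 𝒜 (lam + mu) := by
        rw [add_comm]; exact hmul mu lam b hb a ha
      by_cases h : lam + mu = ν
      · -- show a * b = b * a
        have hcomm : a * b = b * a := by
          by_cases ha0 : a = 0
          · simp [ha0]
          by_cases hb0 : b = 0
          · simp [hb0]
          obtain ⟨u, hu, huU⟩ := hinv lam (fun hbot => ha0 (by
            rw [hbot] at ha; simpa using ha))
          obtain ⟨v, hv, hvU⟩ := hinv mu (fun hbot => hb0 (by
            rw [hbot] at hb; simpa using hb))
          obtain ⟨c, rfl⟩ := hscal lam u a hu ha huU.ne_zero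
          obtain ⟨d, rfl⟩ := hscal mu v b hv hb hvU.ne_zero
          have huv : u * v ∈ Subalgebra.center F A := by
            have : u * v ∈ 𝒜 ν := h ▸ hmul lam mu u hu v hv
            simpa [hZ, Subalgebra.mem_toSubmodule] using hν this
          have hcancel : u * v = v * u := by
            have h1 : u * (u * v) = (u * v) * u := (Subalgebra.mem_center_iff.mp huv u)
            have h2 : u * (u * v) = u * (v * u) := by rw [h1, mul_assoc]
            exact huU.mul_left_cancel h2
          rw [smul_mul_smul_comm, smul_mul_smul_comm, hcancel, mul_comm c d]
        rw [hcomm, sub_self, map_zero]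
      · rw [map_sub, hπne hab h, hπne hba h, sub_zero]
    -- extend by bilinearity
    have hb' : ∀ a : A, a ∈ iSup 𝒜 → ∀ b : A, b ∈ iSup 𝒜 → π ν (a * b - b * a) = 0 := by
      intro a ha
      refine Submodule.iSup_induction 𝒜
        (motive := fun a => ∀ b : A, b ∈ iSup 𝒜 → π ν (a * b - b * a) = 0) ha ?_ ?_ ?_
      · intro lam x hx b hbmem
        refine Submodule.iSup_induction 𝒜
          (motive := fun b => π ν (x * b - b * x) = 0) hbmem ?_ ?_ ?_
        · intro mu y hy; exact key lam mu x hx y hy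
        · simp
        · intro y z hy hz
          have : x * (y + z) - (y + z) * x = (x * y - y * x) + (x * z - z * x) := by noncomm_ring
          rw [this, map_add, hy, hz, add_zero]
      · intro b _; simp
      · intro x y hx hy b hbmem
        have : (x + y) * b - b * (x + y) = (x * b - b * x) + (y * b - b * y) := by noncomm_ring
        rw [this, map_add, hx b hbmem, hy b hbmem, add_zero]
    exact hb' a (htop ▸ Submodule.mem_top) b (htop ▸ Submodule.mem_top)
  constructor
  · -- disjointness
    rw [Submodule.disjoint_def]
    intro x hxZ hxC
    have hν : ∀ ν : Λ, π ν x = 0 := by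
      intro ν
      by_cases hc : 𝒜 ν ≤ Z
      · -- π ν kills C
        have hker : C ≤ LinearMap.ker (π ν) := by
          rw [hC]
          refine Submodule.span_le.mpr ?_
          rintro _ ⟨a, b, rfl⟩
          exact hB2 ν hc a b
        exact hker hxC
      · by_contra h0
        refine hc fun y hy => ?_
        obtain ⟨c, rfl⟩ := hscal ν (π ν x) y (hπmem ν x) hy h0
        exact Z.smul_mem c (hZproj ν x hxZ)
    rw [← DirectSum.sum_support_decompose 𝒜 x]
    exact Finset.sum_eq_zero fun i _ => hν i
  · -- codisjointness
    rw [codisjoint_iff, eq_top_iff, htop]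
    refine iSup_le fun ν => ?_
    by_cases hbot : 𝒜 ν = ⊥
    · rw [hbot]; exact bot_le
    obtain ⟨u, hu, huU⟩ := hinv ν hbot
    have hu0 : u ≠ 0 := huU.ne_zero
    by_cases hc : u ∈ Z
    · intro x hx
      obtain ⟨c, rfl⟩ := hscal ν u x hu hx hu0
      exact Submodule.mem_sup_left (Z.smul_mem c hc)
    · -- u is not central: find a homogeneous element not commuting with u
      have hex : ∃ mu : Λ, ∃ w ∈ 𝒜 mu, u * w ≠ w * u := by
        by_contra h
        push_neg at h
        exact hc (hcentral u h)
      obtain ⟨mu, w, hw, hnc⟩ := hex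
      have hw0 : w ≠ 0 := by rintro rfl; simp at hnc
      obtain ⟨v, hv, hvU⟩ := hinv mu (fun hbot' => hw0 (by
        rw [hbot'] at hw; simpa using hw))
      obtain ⟨d, rfl⟩ := hscal mu v w hv hw hvU.ne_zero
      have hnc' : u * v ≠ v * u := by
        intro h
        apply hnc
        rw [mul_smul_comm, smul_mul_assoc, h]
      have huv : u * v ∈ 𝒜 (ν + mu) := hmul ν mu u hu v hv
      have hvu : v * u ∈ 𝒜 (ν + mu) := by rw [add_comm]; exact hmul mu ν v hv u hu
      have huvU : IsUnit (u * v) := huU.mul hvU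
      obtain ⟨q, hq⟩ := hscal (ν + mu) (u * v) (v * u) huv hvu huvU.ne_zero
      have hq0 : q ≠ 0 := by
        rintro rfl
        exact (hvU.mul huU).ne_zero (by simpa using hq)
      have hq1 : q ≠ 1 := by rintro rfl; simp at hq; exact hnc' hq.symm
      -- compute the commutator [u*v, v⁻¹]
      set vu : Aˣ := hvU.unit with hvu_def
      have hvuc : (vu : A) = v := hvU.unit_spec
      have e1 : (u * v) * (↑vu⁻¹ : A) = u := by
        rw [mul_assoc, ← hvuc, Units.mul_inv, mul_one]
      have e2 : (↑vu⁻¹ : A) * (u * v) = q⁻¹ • u := by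
        have huv' : u * v = q⁻¹ • (v * u) := by
          rw [hq, smul_smul, inv_mul_cancel₀ hq0, one_smul]
        rw [huv', mul_smul_comm, ← mul_assoc, ← hvuc, Units.inv_mul, one_mul]
      have ecomm : (u * v) * (↑vu⁻¹ : A) - (↑vu⁻¹ : A) * (u * v) = (1 - q⁻¹) • u := by
        rw [e1, e2, sub_smul, one_smul]
      have hmemC : (1 - q⁻¹) • u ∈ C := by
        rw [← ecomm, hC]
        exact Submodule.subset_span ⟨u * v, (↑vu⁻¹ : A), rfl⟩
      have h1q : (1 : F) - q⁻¹ ≠ 0 := by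
        rw [sub_ne_zero]
        intro h
        exact hq1 (by rw [← inv_inv q, ← h, inv_one])
      have huC : u ∈ C := by
        have := C.smul_mem (1 - q⁻¹)⁻¹ hmemC
        rwa [smul_smul, inv_mul_cancel₀ h1q, one_smul] at this
      intro x hx
      obtain ⟨c, rfl⟩ := hscal ν u x hu hx hu0
      exact Submodule.mem_sup_right (C.smul_mem c huC)
end
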